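/- On the monoplex cycle network G_C on N ≥ 7 agents with seed set S₀ = {j}, for all indices with 3 ≤ i ≤ N−3 and j ∈ {2, …, i−2} ∪ {i+2, …, N−2}, the probability that agent i is active at steady state of the LTM is ℙ_LTM(i) = (1/2)^{|i−j|} + (1/2)^{N−|i−j|}. -/

import Mathlib

open MeasureTheory

inductive Protocol
  | OR
  | AND
deriving DecidableEq

noncomputable def ltmStep {n m : ℕ} (w : Fin m → Fin n → Fin n → ℝ)
    (u : Fin n → Protocol) (μ : Fin n → Fin m → ℝ)
    (A : Finset (Fin n)) : Finset (Fin n) :=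
  A ∪ Finset.univ.filter fun i =>
    (u i = Protocol.OR ∧ ∃ k, μ i k < ∑ j ∈ A, w k i j) ∨
    (u i = Protocol.AND ∧ ∀ k, μ i k < ∑ j ∈ A, w k i j)

noncomputable def ltmSS {n m : ℕ} (w : Fin m → Fin n → Fin n → ℝ)
    (u : Fin n → Protocol) (S₀ : Finset (Fin n))
    (μ : Fin n → Fin m → ℝ) : Finset (Fin n) :=
  (ltmStep w u μ)^[n] S₀

noncomputable def thMeasure (n m : ℕ) : Measure (Fin n → Fin m → ℝ) :=
  Measure.pi fun _ => Measure.pi fun _ => volume.restrict (Set.Icc (0:ℝ) 1)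

noncomputable def pLTM {n m : ℕ} (w : Fin m → Fin n → Fin n → ℝ)
    (u : Fin n → Protocol) (S₀ : Finset (Fin n)) (i : Fin n) : ℝ :=
  (thMeasure n m {μ | i ∈ ltmSS w u S₀ μ}).toReal

def lemStep {n m : ℕ} (S₀ : Finset (Fin n)) (u : Fin n → Protocol)
    (σ : Fin n → Fin m → Fin n) (A : Finset (Fin n)) : Finset (Fin n) :=
  S₀ ∪ A ∪ Finset.univ.filter fun i =>
    (u i = Protocol.OR ∧ ∃ k, σ i k ∈ A) ∨
    (u i = Protocol.AND ∧ ∀ k, σ i k ∈ A)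

def UReachable {n m : ℕ} (S₀ : Finset (Fin n)) (u : Fin n → Protocol)
    (σ : Fin n → Fin m → Fin n) (i : Fin n) : Prop :=
  i ∈ (lemStep S₀ u σ)^[n] S₀

instance {n m : ℕ} (S₀ : Finset (Fin n)) (u : Fin n → Protocol)
    (σ : Fin n → Fin m → Fin n) (i : Fin n) : Decidable (UReachable S₀ u σ i) := by
  unfold UReachable; infer_instance

noncomputable def rProb {n m : ℕ} (w : Fin m → Fin n → Fin n → ℝ)
    (S₀ : Finset (Fin n)) (u : Fin n → Protocol) (i : Fin n) : ℝ :=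
  ∑ σ : Fin n → Fin m → Fin n,
    if UReachable S₀ u σ i then ∏ a : Fin n, ∏ k : Fin m, w k a (σ a k) else 0

noncomputable def casCen {n m : ℕ} (w : Fin m → Fin n → Fin n → ℝ)
    (u : Fin n → Protocol) (j : Fin n) : ℝ :=
  ∑ i : Fin n, pLTM w u {j} i

noncomputable def pathW (N : ℕ) (i j : Fin N) : ℝ :=
  if j.val = i.val + 1 ∨ i.val = j.val + 1 then
    (if i.val = 0 ∨ i.val = N - 1 then 1 else 1/2)
  else 0

noncomputable def cycleW (N : ℕ) (i j : Fin N) : ℝ :=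
  if (i.val + 1) % N = j.val ∨ (j.val + 1) % N = i.val then 1/2 else 0

noncomputable def permW2 (N : ℕ) (i j : Fin N) : ℝ :=
  if ((i.val + 1) % N = j.val ∨ (j.val + 1) % N = i.val) ∧
      ¬((i.val = N - 2 ∧ j.val = N - 1) ∨ (i.val = N - 1 ∧ j.val = N - 2)) then
    (if i.val = N - 2 ∨ i.val = N - 1 then 1 else 1/2)
  else 0

/-!
On the cycle a node with exactly one active neighbour receives weight `1/2`, and one with two
active neighbours receives weight `1`, which almost surely exceeds its threshold. Hence activation
spreads from the seed `j` clockwise and counterclockwise along the runs of nodes with threshold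
below `1/2`, and the node at clockwise distance `d` ends up active iff one of the two runs reaches
it, or the runs reach both of its neighbours. These events are boxes for the product measure;
the overlap of the two runs has the same probability `2^-(N-1)` as the event that they meet at the
node with its threshold in `[1/2, 1)`, so inclusion–exclusion gives `2^-d + 2^-(N-d)`.
-/

open Finset

noncomputable def monoStep {n : ℕ} (w : Fin n → Fin n → ℝ) (θ : Fin n → ℝ)
    (A : Finset (Fin n)) : Finset (Fin n) :=
  A ∪ univ.filter fun i => θ i < ∑ j ∈ A, w i j

theorem ltmStep_fin_one {n : ℕ} (w : Fin 1 → Fin n → Fin n → ℝ) (u : Fin n → Protocol)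
    (μ : Fin n → Fin 1 → ℝ) : ltmStep w u μ = monoStep (w 0) fun i => μ i 0 := by
  funext A
  refine congrArg (A ∪ ·) (filter_congr fun i _ => ?_)
  cases u i <;> simp [Fin.exists_fin_one, Fin.forall_fin_one]

theorem monotone_iterate_monoStep {n : ℕ} (w : Fin n → Fin n → ℝ) (θ : Fin n → ℝ) :
    Monotone fun t => (monoStep w θ)^[t] :=
  Function.monotone_iterate_of_id_le fun _ => subset_union_left

section Measure

variable {n : ℕ}

theorem thMeasure_setOf_forall_mem (B : Fin n → Set ℝ) :
    thMeasure n 1 {μ | ∀ a, μ a 0 ∈ B a} = ∏ a, volume (B a ∩ Set.Icc 0 1) := by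
  have hbox : {μ : Fin n → Fin 1 → ℝ | ∀ a, μ a 0 ∈ B a} =
      Set.univ.pi fun a => Set.univ.pi fun _ => B a := by
    ext μ
    simp [Fin.forall_fin_one]
  simp [thMeasure, hbox, Measure.pi_pi, Measure.restrict_apply' measurableSet_Icc]

theorem ae_thMeasure_mem_Icc :
    ∀ᵐ μ ∂thMeasure n 1, ∀ a, μ a 0 ∈ Set.Icc (0 : ℝ) 1 := by
  have h : ∀ᵐ v ∂(Measure.pi fun _ : Fin 1 => volume.restrict (Set.Icc (0 : ℝ) 1)),
      v 0 ∈ Set.Icc (0 : ℝ) 1 :=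
    Measure.tendsto_eval_ae_ae.eventually (ae_restrict_mem measurableSet_Icc)
  exact ae_all_iff.2 fun a =>
    (Measure.tendsto_eval_ae_ae (μ := fun _ : Fin n => _) (i := a)).eventually h

def lowEvent (T : Finset (Fin n)) (c : Fin n) (I : Set ℝ) : Set (Fin n → Fin 1 → ℝ) :=
  {μ | (∀ a ∈ T, μ a 0 < 1/2) ∧ μ c 0 ∈ I}

theorem measurableSet_lowEvent (T : Finset (Fin n)) (c : Fin n) {I : Set ℝ}
    (hI : MeasurableSet I) : MeasurableSet (lowEvent T c I) := by
  have hmeas (a : Fin n) : Measurable fun μ : Fin n → Fin 1 → ℝ => μ a 0 := by fun_prop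
  rw [lowEvent, Set.ofPred_and, Set.ofPred_forall]
  refine (MeasurableSet.iInter fun a => ?_).inter (hmeas c hI)
  rw [Set.ofPred_forall]
  exact MeasurableSet.iInter fun _ => measurableSet_lt (hmeas a) measurable_const

theorem lowEvent_inter_lowEvent (T T' : Finset (Fin n)) (c : Fin n) (I : Set ℝ) :
    lowEvent T c I ∩ lowEvent T' c I = lowEvent (T ∪ T') c I := by
  ext μ
  simp only [lowEvent, Set.mem_inter_iff, Set.mem_ofPred_eq, forall_mem_union]
  tauto

theorem volume_Iio_half_inter_Icc :
    volume (Set.Iio (1/2 : ℝ) ∩ Set.Icc 0 1) = ENNReal.ofReal (1/2) := by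
  have : Set.Iio (1/2 : ℝ) ∩ Set.Icc 0 1 = Set.Ico 0 (1/2) := by
    ext x
    simp only [Set.mem_inter_iff, Set.mem_Iio, Set.mem_Icc, Set.mem_Ico]
    constructor
    · rintro ⟨h, h₀, -⟩
      exact ⟨h₀, h⟩
    · rintro ⟨h₀, h⟩
      exact ⟨h, h₀, by linarith⟩
  rw [this, Real.volume_Ico, sub_zero]

theorem volume_Ico_half_one_inter_Icc :
    volume (Set.Ico (1/2 : ℝ) 1 ∩ Set.Icc 0 1) = ENNReal.ofReal (1/2) := by
  have : Set.Ico (1/2 : ℝ) 1 ⊆ Set.Icc 0 1 :=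
    Set.Ico_subset_Icc_self.trans (Set.Icc_subset_Icc (by norm_num) le_rfl)
  rw [Set.inter_eq_left.2 this, Real.volume_Ico]
  norm_num

theorem thMeasure_lowEvent {T : Finset (Fin n)} {c : Fin n} (hc : c ∉ T) (I : Set ℝ) :
    thMeasure n 1 (lowEvent T c I) = ENNReal.ofReal (1/2) ^ #T * volume (I ∩ Set.Icc 0 1) := by
  have hbox : lowEvent T c I = {μ | ∀ a, μ a 0 ∈
      if a = c then I else if a ∈ T then Set.Iio (1/2) else Set.univ} := by
    ext μ
    simp only [lowEvent, Set.mem_ofPred_eq]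
    constructor
    · rintro ⟨hT, hμc⟩ a
      split_ifs <;> simp_all
    · intro h
      refine ⟨fun a ha => ?_, by simpa using h c⟩
      simpa [ha, ne_of_mem_of_not_mem ha hc] using h a
  rw [hbox, thMeasure_setOf_forall_mem, Fintype.prod_eq_mul_prod_compl c, if_pos rfl, mul_comm]
  congr 1
  have hvol (a : Fin n) :
      volume ((if a ∈ T then Set.Iio (1/2 : ℝ) else Set.univ) ∩ Set.Icc 0 1) =
      if a ∈ T then ENNReal.ofReal (1/2) else 1 := by
    split_ifs
    · exact volume_Iio_half_inter_Icc
    · simp [Real.volume_Icc]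
  rw [prod_congr rfl fun a ha => by rw [if_neg (by simpa using ha), hvol], prod_ite_mem,
    inter_eq_right.2 fun a ha => by simpa using ne_of_mem_of_not_mem ha hc, prod_const]

end Measure

section Cycle

open scoped Fin.NatCast Fin.CommRing

variable {N : ℕ} [NeZero N]

theorem Fin.val_add_one_mod_eq_iff (a b : Fin N) : (a.val + 1) % N = b.val ↔ a + 1 = b := by
  rw [Fin.ext_iff, Fin.val_add, Fin.val_one', Nat.add_mod_mod]

theorem Fin.add_one_ne_sub_one (hN : 3 ≤ N) (a : Fin N) : a + 1 ≠ a - 1 := by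
  intro h
  have h2 : ((2 : ℕ) : Fin N) = 0 := by
    rw [Nat.cast_ofNat]
    linear_combination h
  rw [Fin.natCast_eq_zero] at h2
  have := Nat.le_of_dvd two_pos h2
  omega

theorem Fin.add_natCast_inj (j : Fin N) {k l : ℕ} (hk : k < N) (hl : l < N) :
    j + (k : Fin N) = j + l ↔ k = l := by
  rw [add_right_inj, Fin.ext_iff, Fin.val_natCast, Fin.val_natCast,
    Nat.mod_eq_of_lt hk, Nat.mod_eq_of_lt hl]

theorem cycleW_apply (a x : Fin N) :
    cycleW N a x = if x = a + 1 ∨ x = a - 1 then 1/2 else 0 := by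
  simp only [cycleW, Fin.val_add_one_mod_eq_iff, eq_sub_iff_add_eq, eq_comm (b := x)]

theorem sum_cycleW (hN : 3 ≤ N) (a : Fin N) (A : Finset (Fin N)) :
    ∑ x ∈ A, cycleW N a x =
      (if a + 1 ∈ A then 1/2 else 0) + (if a - 1 ∈ A then 1/2 else 0) := by
  have hsplit (x : Fin N) : cycleW N a x =
      (if x = a + 1 then 1/2 else 0) + (if x = a - 1 then 1/2 else 0) := by
    have := Fin.add_one_ne_sub_one hN a
    rw [cycleW_apply]
    split_ifs <;> simp_all
  simp only [hsplit, sum_add_distrib, sum_ite_eq']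

variable {θ : Fin N → ℝ} {A : Finset (Fin N)} {b : Fin N}

theorem mem_monoStep_cycleW (hN : 3 ≤ N) :
    b ∈ monoStep (cycleW N) θ A ↔
      b ∈ A ∨ θ b < (if b + 1 ∈ A then 1/2 else 0) + (if b - 1 ∈ A then 1/2 else 0) := by
  simp [monoStep, sum_cycleW hN]

theorem mem_monoStep_cycleW_of_lt_half (hN : 3 ≤ N) (hA : b + 1 ∈ A ∨ b - 1 ∈ A)
    (hθ : θ b < 1/2) : b ∈ monoStep (cycleW N) θ A := by
  refine (mem_monoStep_cycleW hN).2 (Or.inr ?_)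
  rcases hA with h | h <;> split_ifs <;> linarith

theorem mem_monoStep_cycleW_of_lt_one (hN : 3 ≤ N) (h₁ : b + 1 ∈ A) (h₂ : b - 1 ∈ A)
    (hθ : θ b < 1) : b ∈ monoStep (cycleW N) θ A := by
  refine (mem_monoStep_cycleW hN).2 (Or.inr ?_)
  rw [if_pos h₁, if_pos h₂]
  linarith

theorem mem_monoStep_cycleW_cases (hN : 3 ≤ N) (h₀ : 0 ≤ θ b)
    (hb : b ∈ monoStep (cycleW N) θ A) :
    b ∈ A ∨ (b + 1 ∈ A ∨ b - 1 ∈ A) ∧ θ b < 1/2 ∨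
      b + 1 ∈ A ∧ b - 1 ∈ A ∧ θ b < 1 := by
  rcases (mem_monoStep_cycleW hN).1 hb with h | h
  · exact Or.inl h
  · right
    split_ifs at h with h₁ h₂ h₂
    · exact Or.inr ⟨h₁, h₂, by linarith⟩
    · exact Or.inl ⟨Or.inl h₁, by linarith⟩
    · exact Or.inl ⟨Or.inr h₂, by linarith⟩
    · linarith

variable {j : Fin N} {k : ℕ}

/- Node `j + k`, for `k : ℕ` cast to `Fin N`, is `k` steps clockwise from the seed `j`;
`k ∈ [1, N)` parametrises the other nodes. -/
def LowRun (θ : Fin N → ℝ) (j : Fin N) (a b : ℕ) : Prop :=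
  ∀ l ∈ Ico a b, θ (j + l) < 1/2

theorem lowRun_of_le {a b : ℕ} (h : b ≤ a) : LowRun θ j a b :=
  fun l hl => absurd hl (by simp; omega)

theorem LowRun.mono {a b a' b' : ℕ} (h : LowRun θ j a b) (ha : a ≤ a') (hb : b' ≤ b) :
    LowRun θ j a' b' :=
  fun l hl => h l (by simp only [mem_Ico] at hl ⊢; omega)

theorem LowRun.snoc {a b : ℕ} (h : LowRun θ j a b) (hb : θ (j + b) < 1/2) :
    LowRun θ j a (b + 1) := by
  intro l hl
  rcases (show l ∈ Ico a b ∨ l = b by simp only [mem_Ico] at hl ⊢; omega) with hl | rfl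
  exacts [h l hl, hb]

theorem LowRun.cons {a b : ℕ} (ha : θ (j + a) < 1/2) (h : LowRun θ j (a + 1) b) :
    LowRun θ j a b := by
  intro l hl
  rcases (show l = a ∨ l ∈ Ico (a + 1) b by simp only [mem_Ico] at hl ⊢; omega) with rfl | hl
  exacts [ha, h l hl]

/-- `j + k` is reached by the clockwise or by the counterclockwise low run from `j`, or the two
runs reach its two neighbours and its threshold is below `1`. -/
def CycleActive (θ : Fin N → ℝ) (j : Fin N) (k : ℕ) : Prop :=
  LowRun θ j 1 (k + 1) ∨ LowRun θ j k N ∨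
    LowRun θ j 1 k ∧ LowRun θ j (k + 1) N ∧ θ (j + k) < 1

/-- Activation crosses the edge between `j + (k - 1)` and `j + k`. -/
def EdgeActive (θ : Fin N → ℝ) (j : Fin N) (k : ℕ) : Prop :=
  LowRun θ j 1 k ∨ LowRun θ j k N

theorem cycleActive_zero : CycleActive θ j 0 :=
  Or.inl (lowRun_of_le le_rfl)

theorem edgeActive_self : EdgeActive θ j N :=
  Or.inr (lowRun_of_le le_rfl)

theorem CycleActive.edgeActive (h : CycleActive θ j k) :
    EdgeActive θ j k ∧ EdgeActive θ j (k + 1) := by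
  rcases h with h | h | ⟨h₁, h₂, -⟩
  · exact ⟨Or.inl (h.mono le_rfl k.le_succ), Or.inl h⟩
  · exact ⟨Or.inr h, Or.inr (h.mono k.le_succ le_rfl)⟩
  · exact ⟨Or.inl h₁, Or.inr h₂⟩

theorem cycleActive_of_edgeActive_of_lt_half
    (h : EdgeActive θ j k ∨ EdgeActive θ j (k + 1)) (hθ : θ (j + k) < 1/2) :
    CycleActive θ j k := by
  rcases h with (h | h) | (h | h)
  · exact Or.inl (h.snoc hθ)
  · exact Or.inr (Or.inl h)
  · exact Or.inl h
  · exact Or.inr (Or.inl (h.cons hθ))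

theorem cycleActive_of_edgeActive_of_lt_one (h₁ : EdgeActive θ j k)
    (h₂ : EdgeActive θ j (k + 1)) (hθ : θ (j + k) < 1) : CycleActive θ j k := by
  rcases h₁ with h₁ | h₁
  · rcases h₂ with h₂ | h₂
    · exact Or.inl h₂
    · exact Or.inr (Or.inr ⟨h₁, h₂, hθ⟩)
  · exact Or.inr (Or.inl h₁)

theorem cycleActive_of_mem_monoStep (hN : 3 ≤ N) (hθ : ∀ a, 0 ≤ θ a)
    (hA : ∀ k < N, j + k ∈ A → CycleActive θ j k) (hk : k < N)
    (h : j + k ∈ monoStep (cycleW N) θ A) : CycleActive θ j k := by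
  rcases Nat.eq_zero_or_pos k with rfl | hk₀
  · exact cycleActive_zero
  have left (h : j + k - 1 ∈ A) : EdgeActive θ j k := by
    rw [add_sub_assoc, ← Nat.cast_one, ← Nat.cast_sub hk₀] at h
    simpa [Nat.sub_add_cancel hk₀] using (hA (k - 1) (by omega) h).edgeActive.2
  have right (h : j + k + 1 ∈ A) : EdgeActive θ j (k + 1) := by
    rcases (show k + 1 < N ∨ k + 1 = N by omega) with hk₁ | hk₁
    · exact (hA (k + 1) hk₁ (by rwa [Nat.cast_succ, ← add_assoc])).edgeActive.1
    · rw [hk₁]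
      exact edgeActive_self
  rcases mem_monoStep_cycleW_cases hN (hθ _) h with h | ⟨h, hθk⟩ | ⟨h₁, h₂, hθk⟩
  · exact hA k hk h
  · exact cycleActive_of_edgeActive_of_lt_half (h.imp right left).symm hθk
  · exact cycleActive_of_edgeActive_of_lt_one (left h₂) (right h₁) hθk

theorem cycleActive_of_mem_iterate (hN : 3 ≤ N) (hθ : ∀ a, 0 ≤ θ a) (t : ℕ) (hk : k < N)
    (h : j + k ∈ (monoStep (cycleW N) θ)^[t] {j}) : CycleActive θ j k := by
  induction t generalizing k with
  | zero =>
    obtain rfl : k = 0 :=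
      (Fin.add_natCast_inj j hk (NeZero.pos N)).1 (by simpa using h)
    exact cycleActive_zero
  | succ t ih =>
    rw [Function.iterate_succ_apply'] at h
    exact cycleActive_of_mem_monoStep hN hθ (fun _ => ih) hk h

theorem mem_iterate_of_lowRun_cw (hN : 3 ≤ N) (h : LowRun θ j 1 (k + 1)) :
    j + k ∈ (monoStep (cycleW N) θ)^[k] {j} := by
  induction k with
  | zero => simp
  | succ k ih =>
    rw [Function.iterate_succ_apply']
    refine mem_monoStep_cycleW_of_lt_half hN (Or.inr ?_) (h _ (by simp))
    rw [Nat.cast_succ, ← add_assoc, add_sub_cancel_right]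
    exact ih (h.mono le_rfl k.succ.le_succ)

theorem mem_iterate_of_lowRun_ccw (hN : 3 ≤ N) {m : ℕ} (hm : m ≤ N)
    (h : LowRun θ j (N - m) N) :
    j + ↑(N - m) ∈ (monoStep (cycleW N) θ)^[m] {j} := by
  induction m with
  | zero => simp
  | succ m ih =>
    rw [Function.iterate_succ_apply']
    refine mem_monoStep_cycleW_of_lt_half hN (Or.inl ?_) (h _ (by simp; omega))
    rw [add_assoc, ← Nat.cast_add_one, show N - (m + 1) + 1 = N - m by omega]
    exact ih (by omega) (h.mono (by omega) le_rfl)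

theorem mem_iterate_of_cycleActive (hN : 3 ≤ N) (hk : k < N) (h : CycleActive θ j k) :
    j + k ∈ (monoStep (cycleW N) θ)^[N] {j} := by
  have hmono := monotone_iterate_monoStep (cycleW N) θ
  have ccw {m : ℕ} (hm : m ≤ N) (h : LowRun θ j m N) :
      j + m ∈ (monoStep (cycleW N) θ)^[N - m] {j} := by
    have := mem_iterate_of_lowRun_ccw hN (m := N - m) (by omega) (by rwa [Nat.sub_sub_self hm])
    rwa [Nat.sub_sub_self hm] at this
  rcases h with h | h | ⟨h₁, h₂, hθ⟩
  · exact hmono hk.le _ (mem_iterate_of_lowRun_cw hN h)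
  · exact hmono (N.sub_le k) _ (ccw hk.le h)
  rcases Nat.eq_zero_or_pos k with rfl | hk₀
  · exact hmono (Nat.zero_le N) _ (by simp)
  have hleft : j + ↑(k - 1) ∈ (monoStep (cycleW N) θ)^[N - 1] {j} :=
    hmono (by omega) _ (mem_iterate_of_lowRun_cw hN (by rwa [Nat.sub_add_cancel hk₀]))
  have hright : j + ↑(k + 1) ∈ (monoStep (cycleW N) θ)^[N - 1] {j} :=
    hmono (by omega) _ (ccw hk h₂)
  have hlast : (monoStep (cycleW N) θ)^[N] {j} =
      monoStep (cycleW N) θ ((monoStep (cycleW N) θ)^[N - 1] {j}) := by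
    rw [← Function.iterate_succ_apply' (monoStep (cycleW N) θ), Nat.succ_eq_add_one,
      Nat.sub_add_cancel NeZero.one_le]
  rw [hlast]
  refine mem_monoStep_cycleW_of_lt_one hN ?_ ?_ hθ
  · rwa [add_assoc, ← Nat.cast_add_one]
  · rwa [Nat.cast_sub hk₀, Nat.cast_one, ← add_sub_assoc] at hleft

theorem mem_iterate_monoStep_cycleW_iff (hN : 3 ≤ N) (hθ : ∀ a, 0 ≤ θ a) (hk : k < N) :
    j + k ∈ (monoStep (cycleW N) θ)^[N] {j} ↔ CycleActive θ j k :=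
  ⟨cycleActive_of_mem_iterate hN hθ N hk, mem_iterate_of_cycleActive hN hk⟩

theorem cycleActive_iff (hk₁ : 1 ≤ k) (hk₂ : k < N) :
    CycleActive θ j k ↔
      (LowRun θ j 1 k ∨ LowRun θ j (k + 1) N) ∧ θ (j + k) < 1/2 ∨
        (LowRun θ j 1 k ∧ LowRun θ j (k + 1) N) ∧ θ (j + k) ∈ Set.Ico (1/2) 1 := by
  have hcw : LowRun θ j 1 (k + 1) ↔ LowRun θ j 1 k ∧ θ (j + k) < 1/2 :=
    ⟨fun h => ⟨h.mono le_rfl k.le_succ, h k (by simp; omega)⟩, fun h => h.1.snoc h.2⟩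
  have hccw : LowRun θ j k N ↔ LowRun θ j (k + 1) N ∧ θ (j + k) < 1/2 :=
    ⟨fun h => ⟨h.mono k.le_succ le_rfl, h k (by simp; omega)⟩, fun h => h.1.cons h.2⟩
  rw [CycleActive, hcw, hccw, Set.mem_Ico]
  constructor
  · rintro (h | h | ⟨h₁, h₂, hθ⟩)
    · exact Or.inl ⟨Or.inl h.1, h.2⟩
    · exact Or.inl ⟨Or.inr h.1, h.2⟩
    · by_cases hθ' : θ (j + k) < 1/2
      · exact Or.inl ⟨Or.inl h₁, hθ'⟩
      · exact Or.inr ⟨⟨h₁, h₂⟩, not_lt.1 hθ', hθ⟩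
  · rintro (⟨h | h, hθ⟩ | ⟨⟨h₁, h₂⟩, -, hθ⟩)
    · exact Or.inl ⟨h, hθ⟩
    · exact Or.inr (Or.inl ⟨h, hθ⟩)
    · exact Or.inr (Or.inr ⟨h₁, h₂, hθ⟩)

def cycleArc (j : Fin N) (a b : ℕ) : Finset (Fin N) :=
  (Ico a b).image fun l : ℕ => j + (l : Fin N)

theorem card_cycleArc (j : Fin N) {a b : ℕ} (hb : b ≤ N) : #(cycleArc j a b) = b - a := by
  refine (card_image_of_injOn fun k hk l hl h => ?_).trans (Nat.card_Ico a b)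
  simp only [coe_Ico, Set.mem_Ico] at hk hl
  exact (Fin.add_natCast_inj j (by omega) (by omega)).1 h

theorem add_natCast_mem_cycleArc_iff {a b : ℕ} (hk : k < N) (hb : b ≤ N) :
    j + (k : Fin N) ∈ cycleArc j a b ↔ k ∈ Ico a b := by
  refine ⟨fun h => ?_, fun h => mem_image_of_mem _ h⟩
  obtain ⟨l, hl, h⟩ := mem_image.1 h
  rwa [← (Fin.add_natCast_inj j (by simp at hl; omega) hk).1 h]

theorem lowRun_iff_forall_mem_cycleArc {a b : ℕ} :
    LowRun θ j a b ↔ ∀ x ∈ cycleArc j a b, θ x < 1/2 := by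
  rw [cycleArc, forall_mem_image]
  rfl

theorem thMeasure_cycleActive (j : Fin N) (hk₁ : 1 ≤ k) (hk₂ : k < N) :
    thMeasure N 1 {μ | CycleActive (fun a => μ a 0) j k} =
      ENNReal.ofReal (1/2) ^ k + ENNReal.ofReal (1/2) ^ (N - k) := by
  set T₁ := cycleArc j 1 k
  set T₂ := cycleArc j (k + 1) N
  set c := j + (k : Fin N)
  have hc₁ : c ∉ T₁ := by simp [T₁, c, add_natCast_mem_cycleArc_iff hk₂ hk₂.le]
  have hc₂ : c ∉ T₂ := by simp [T₂, c, add_natCast_mem_cycleArc_iff hk₂ le_rfl]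
  set E₁ := lowEvent T₁ c (Set.Iio (1/2))
  set E₂ := lowEvent T₂ c (Set.Iio (1/2))
  set E₃ := lowEvent (T₁ ∪ T₂) c (Set.Ico (1/2) 1)
  have hE : {μ | CycleActive (fun a => μ a 0) j k} = (E₁ ∪ E₂) ∪ E₃ := by
    ext μ
    simp only [Set.mem_ofPred_eq, cycleActive_iff hk₁ hk₂, lowRun_iff_forall_mem_cycleArc,
      E₁, E₂, E₃, lowEvent, Set.mem_union, forall_mem_union, Set.mem_Iio]
    tauto
  have hdisj : Disjoint (E₁ ∪ E₂) E₃ := by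
    rw [Set.disjoint_left]
    rintro μ (⟨-, h⟩ | ⟨-, h⟩) ⟨-, h'⟩ <;> exact absurd h (not_lt.2 h'.1)
  have hE₃ : thMeasure N 1 E₃ = thMeasure N 1 (E₁ ∩ E₂) := by
    rw [lowEvent_inter_lowEvent, thMeasure_lowEvent (by simp [hc₁, hc₂]),
      thMeasure_lowEvent (by simp [hc₁, hc₂]), volume_Iio_half_inter_Icc,
      volume_Ico_half_one_inter_Icc]
  rw [hE, measure_union hdisj (measurableSet_lowEvent _ _ measurableSet_Ico), hE₃,
    measure_union_add_inter _ (measurableSet_lowEvent _ _ measurableSet_Iio),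
    thMeasure_lowEvent hc₁, thMeasure_lowEvent hc₂, volume_Iio_half_inter_Icc,
    card_cycleArc j hk₂.le, card_cycleArc j le_rfl, pow_sub_one_mul (by omega),
    ← Nat.sub_sub, pow_sub_one_mul (by omega)]

theorem pLTM_cycleW (hN : 3 ≤ N) (u : Fin N → Protocol) (j : Fin N) (hk₁ : 1 ≤ k)
    (hk₂ : k < N) :
    pLTM (fun _ : Fin 1 => cycleW N) u {j} (j + k) = (1/2) ^ k + (1/2) ^ (N - k) := by
  have hevent : {μ | j + (k : Fin N) ∈ ltmSS (fun _ : Fin 1 => cycleW N) u {j} μ}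
      =ᵐ[thMeasure N 1] {μ | CycleActive (fun a => μ a 0) j k} := by
    refine Filter.eventuallyEq_set.2 ?_
    filter_upwards [ae_thMeasure_mem_Icc] with μ hμ
    rw [ltmSS, ltmStep_fin_one]
    exact mem_iterate_monoStep_cycleW_iff hN (fun a => (hμ a).1) hk₂
  rw [pLTM, measure_congr hevent, thMeasure_cycleActive j hk₁ hk₂]
  simp [ENNReal.toReal_add, ENNReal.toReal_pow]

theorem pLTM_cycleW_of_ne (hN : 3 ≤ N) (u : Fin N → Protocol) {i j : Fin N} (hij : i ≠ j) :
    pLTM (fun _ : Fin 1 => cycleW N) u {j} i =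
      (1/2) ^ (i - j).val + (1/2) ^ (N - (i - j).val) := by
  have h := pLTM_cycleW hN u j (k := (i - j).val)
    (Nat.pos_of_ne_zero (Fin.val_ne_zero_iff.2 (sub_ne_zero.2 hij))) (i - j).isLt
  rwa [Fin.cast_val_eq_self, add_sub_cancel] at h

end Cycle

theorem cycle_prob_general (N : ℕ) (u : Fin N → Protocol) (i j : Fin N)
    (hd : 2 ≤ Nat.dist i.val j.val) :
    pLTM (fun _ : Fin 1 => cycleW N) u {j} i =
      (1/2 : ℝ) ^ (Nat.dist i.val j.val) +
        (1/2 : ℝ) ^ (N - Nat.dist i.val j.val) := by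
  have : NeZero N := NeZero.of_pos i.pos
  have hdist : Nat.dist i.val j.val = i.val - j.val + (j.val - i.val) := rfl
  have hN : 3 ≤ N := by omega
  rw [pLTM_cycleW_of_ne hN u (Fin.ne_of_val_ne (by omega))]
  rcases le_or_gt j i with h | h
  · rw [Fin.coe_sub_iff_le.2 h, hdist, Nat.sub_eq_zero_of_le h, add_zero]
  · rw [Fin.coe_sub_iff_lt.2 h, hdist, Nat.sub_eq_zero_of_le h.le, zero_add, add_comm]
    congr 2 <;> omega

/-- on the monoplex cycle network on `N ≥ 7` agents with seed `{j}`,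
under the same index conditions as on the permutation network,
ℙ_LTM(i) = (1/2)^{|i−j|} + (1/2)^{N−|i−j|} (for any protocol assignment `u`,
since OR and AND coincide on a monoplex network). -/
theorem cycle_prob (N : ℕ) (hN : 7 ≤ N) (u : Fin N → Protocol) (i j : Fin N)
    (hi1 : 2 ≤ i.val) (hi2 : i.val ≤ N - 4)
    (hj1 : 1 ≤ j.val) (hj2 : j.val ≤ N - 3)
    (hd : 2 ≤ Nat.dist i.val j.val) :
    pLTM (fun _ : Fin 1 => cycleW N) u {j} i =
      (1/2 : ℝ) ^ (Nat.dist i.val j.val) +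
        (1/2 : ℝ) ^ (N - Nat.dist i.val j.val) :=
  cycle_prob_general N u i j hd
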